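/- For every integer t ≥ 1, the complete graph K_t on t vertices is (t, t − 1)-agreeable; that is, for every induced subgraph G' of K_t and every (≤t)-simplicial blowup Q of G', rcr(Q) ≤ (t − 1) · Δ(Q) · ‖Q‖. -/

import Mathlib

/-! ## Basic geometric notions -/

/-- The closed straight-line segment determined by an unordered pair of points of the plane. -/
def segOf : Sym2 (ℝ × ℝ) → Set (ℝ × ℝ) :=
  Sym2.lift ⟨fun a b => segment ℝ a b, fun a b => segment_symm ℝ a b⟩

/-- A set `S` of points of the plane is in *general position* if no three of its points are
collinear and no three distinct segments between pairs of its points have a common point,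
unless all three segments share a common endpoint. -/
def GenPos (S : Set (ℝ × ℝ)) : Prop :=
  (∀ a ∈ S, ∀ b ∈ S, ∀ c ∈ S, a ≠ b → a ≠ c → b ≠ c →
      ¬ Collinear ℝ ({a, b, c} : Set (ℝ × ℝ))) ∧
  (∀ s₁ s₂ s₃ : Sym2 (ℝ × ℝ),
      (∀ x ∈ s₁, x ∈ S) → (∀ x ∈ s₂, x ∈ S) → (∀ x ∈ s₃, x ∈ S) →
      s₁ ≠ s₂ → s₁ ≠ s₃ → s₂ ≠ s₃ →
      ∀ q, q ∈ segOf s₁ → q ∈ segOf s₂ → q ∈ segOf s₃ →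
        ∃ z, z ∈ s₁ ∧ z ∈ s₂ ∧ z ∈ s₃)

/-! ## Multigraphs and their rectilinear drawings -/

/-- A multigraph: parallel edges allowed, no loops.  `E` indexes the edges. -/
structure Multigraph (V E : Type) where
  ends : E → Sym2 V
  not_isDiag : ∀ e, ¬ (ends e).IsDiag

namespace Multigraph

variable {V E : Type}

/-- A rectilinear drawing of a multigraph: an injective placement of the vertices at points
of the plane in general position; each edge is represented by the closed segment between
the points of its endpoints. -/
def IsRectDrawing (_K : Multigraph V E) (p : V → ℝ × ℝ) : Prop :=
  Function.Injective p ∧ GenPos (Set.range p)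

/-- Two edges form a *crossing pair* in a drawing if they have no common endpoint and their
segments have a common point. -/
def CrossingPair (K : Multigraph V E) (p : V → ℝ × ℝ) (e f : E) : Prop :=
  (∀ v : V, ¬ (v ∈ K.ends e ∧ v ∈ K.ends f)) ∧
  (segOf ((K.ends e).map p) ∩ segOf ((K.ends f).map p)).Nonempty

/-- The number of crossings of a rectilinear drawing: the number of unordered crossing
pairs of edges. -/
noncomputable def crossCount (K : Multigraph V E) (p : V → ℝ × ℝ) : ℕ :=
  Nat.card {s : Sym2 E // ∃ e f : E, s = s(e, f) ∧ K.CrossingPair p e f}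

/-- The rectilinear crossing number of a multigraph. -/
noncomputable def rcr (K : Multigraph V E) : ℕ :=
  sInf {n | ∃ p : V → ℝ × ℝ, K.IsRectDrawing p ∧ K.crossCount p = n}

/-- The degree of a vertex: the number of edges incident to it. -/
noncomputable def deg (K : Multigraph V E) (v : V) : ℕ := Nat.card {e : E // v ∈ K.ends e}

/-- The maximum degree `Δ`. -/
noncomputable def maxDeg (K : Multigraph V E) : ℕ := sSup (Set.range K.deg)

/-- The number of edges (counted with multiplicity). -/
noncomputable def edgeCount (_K : Multigraph V E) : ℕ := Nat.card E

/-- The underlying simple graph of a multigraph. -/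
def toSimple (K : Multigraph V E) : SimpleGraph V where
  Adj u v := u ≠ v ∧ ∃ e, K.ends e = s(u, v)
  symm := by
    constructor
    rintro u v ⟨huv, e, he⟩
    exact ⟨huv.symm, e, he.trans (Sym2.eq_swap)⟩
  loopless := ⟨fun v h => h.1 rfl⟩

end Multigraph

/-! ## Simple graphs: rectilinear drawings, degree, edges -/

/-- The multigraph associated with a simple graph (edges indexed by the edge set). -/
def SimpleGraph.toMulti {V : Type} (G : SimpleGraph V) : Multigraph V G.edgeSet where
  ends := Subtype.val
  not_isDiag := fun e => G.not_isDiag_of_mem_edgeSet e.2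

/-- The rectilinear crossing number of a simple graph. -/
noncomputable def SimpleGraph.rcr {V : Type} (G : SimpleGraph V) : ℕ := G.toMulti.rcr

/-- The maximum degree `Δ(G)` of a simple graph. -/
noncomputable def SimpleGraph.maxDeg {V : Type} (G : SimpleGraph V) : ℕ := G.toMulti.maxDeg

/-- The number `‖G‖` of edges of a simple graph. -/
noncomputable def SimpleGraph.edgeCount {V : Type} (G : SimpleGraph V) : ℕ :=
  Nat.card G.edgeSet

/-! ## Topological drawings, crossing number, planarity -/

/-- `A` is the image of a simple arc from `x` to `y`. -/
def IsArc (A : Set (ℝ × ℝ)) (x y : ℝ × ℝ) : Prop :=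
  ∃ γ : Path x y, Function.Injective γ ∧ Set.range γ = A

/-- A drawing of a simple graph in the plane: vertices are distinct points, each edge is a
simple arc between the points of its endpoints, no edge passes through a vertex other than
its own endpoints, two distinct edges meet in finitely many points, and no three edges have
a common point except at a common endpoint. -/
def SimpleGraph.IsTopDrawing {V : Type} (G : SimpleGraph V) (p : V → ℝ × ℝ)
    (A : Sym2 V → Set (ℝ × ℝ)) : Prop :=
  Function.Injective p ∧
  (∀ a b : V, G.Adj a b → IsArc (A s(a, b)) (p a) (p b)) ∧
  (∀ e ∈ G.edgeSet, ∀ v : V, p v ∈ A e → v ∈ e) ∧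
  (∀ e ∈ G.edgeSet, ∀ f ∈ G.edgeSet, e ≠ f → (A e ∩ A f).Finite) ∧
  (∀ e ∈ G.edgeSet, ∀ f ∈ G.edgeSet, ∀ g ∈ G.edgeSet, e ≠ f → e ≠ g → f ≠ g →
    ∀ q : ℝ × ℝ, q ∈ A e → q ∈ A f → q ∈ A g →
      ∃ v : V, v ∈ e ∧ v ∈ f ∧ v ∈ g ∧ p v = q)

/-- The number of crossings of a topological drawing: pairs (pair of edges, point) where the
point lies on both edges and is not the image of a common endpoint. -/
noncomputable def SimpleGraph.topCrossCount {V : Type} (G : SimpleGraph V) (p : V → ℝ × ℝ)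
    (A : Sym2 V → Set (ℝ × ℝ)) : ℕ :=
  Nat.card {x : Sym2 (Sym2 V) × (ℝ × ℝ) //
    ∃ e f : Sym2 V, x.1 = s(e, f) ∧ e ≠ f ∧ e ∈ G.edgeSet ∧ f ∈ G.edgeSet ∧
      x.2 ∈ A e ∧ x.2 ∈ A f ∧ ¬ ∃ v : V, v ∈ e ∧ v ∈ f ∧ p v = x.2}

/-- The crossing number of a simple graph. -/
noncomputable def SimpleGraph.cr {V : Type} (G : SimpleGraph V) : ℕ :=
  sInf {n | ∃ p A, G.IsTopDrawing p A ∧ G.topCrossCount p A = n}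

/-- A graph is planar if it has a crossing-free drawing in the plane. -/
def SimpleGraph.IsPlanarDrawable {V : Type} (G : SimpleGraph V) : Prop :=
  ∃ p A, G.IsTopDrawing p A ∧ G.topCrossCount p A = 0

/-! ## Minors -/

/-- `X.IsMinorOf G`: `X` can be obtained from a subgraph of `G` by contracting edges;
witnessed by disjoint nonempty connected branch sets, one for each vertex of `X`, with an
edge of `G` between the branch sets of any two adjacent vertices of `X`. -/
def SimpleGraph.IsMinorOf {W V : Type} (X : SimpleGraph W) (G : SimpleGraph V) : Prop :=
  ∃ φ : V → Option W,
    (∀ w : W, (φ ⁻¹' {some w}).Nonempty) ∧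
    (∀ w : W, (G.induce (φ ⁻¹' {some w})).Connected) ∧
    (∀ w₁ w₂ : W, X.Adj w₁ w₂ → ∃ a b : V, φ a = some w₁ ∧ φ b = some w₂ ∧ G.Adj a b)

/-! ## Tree decompositions and treewidth -/

/-- `G` has a tree decomposition of width at most `k`. -/
def SimpleGraph.HasTreewidthAtMost {V : Type} (G : SimpleGraph V) (k : ℕ) : Prop :=
  ∃ (ι : Type) (T : SimpleGraph ι) (B : ι → Set V),
    T.IsTree ∧
    (∀ u v : V, G.Adj u v → ∃ x, u ∈ B x ∧ v ∈ B x) ∧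
    (∀ v : V, {x | v ∈ B x}.Nonempty) ∧
    (∀ v : V, (T.induce {x | v ∈ B x}).Connected) ∧
    (∀ x, (B x).Finite ∧ (B x).ncard ≤ k + 1)

/-! ## Clique-sums -/

/-- `IsCliqueSumOf k G A B`: the graph `G` is obtained by an `l`-clique-sum of the disjoint
graphs `A` and `B` for some `1 ≤ l ≤ k`: cliques of size `l` of `A` and `B` are identified
via a bijection, and some edges of the resulting clique are possibly deleted. -/
def IsCliqueSumOf (k : ℕ) {V V₁ V₂ : Type} (G : SimpleGraph V)
    (A : SimpleGraph V₁) (B : SimpleGraph V₂) : Prop :=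
  ∃ (i : V₁ → V) (j : V₂ → V) (S : Set V₁) (T : Set V₂),
    Function.Injective i ∧ Function.Injective j ∧
    Set.range i ∪ Set.range j = Set.univ ∧
    A.IsClique S ∧ B.IsClique T ∧
    S.Nonempty ∧ S.Finite ∧ S.ncard ≤ k ∧
    i '' S = Set.range i ∩ Set.range j ∧
    j '' T = Set.range i ∩ Set.range j ∧
    (∀ a a', A.Adj a a' → G.Adj (i a) (i a') ∨ (a ∈ S ∧ a' ∈ S)) ∧
    (∀ b b', B.Adj b b' → G.Adj (j b) (j b') ∨ (b ∈ T ∧ b' ∈ T)) ∧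
    (∀ x y, G.Adj x y →
      (∃ a a', A.Adj a a' ∧ i a = x ∧ i a' = y) ∨
      (∃ b b', B.Adj b b' ∧ j b = x ∧ j b' = y))

/-- `CliqueSumGen k P G`: `G` can be obtained by iterated `(≤ k)`-clique-sums of pieces each
of which satisfies the property `P`. -/
inductive CliqueSumGen (k : ℕ) (P : ∀ {W : Type}, SimpleGraph W → Prop) :
    ∀ {V : Type}, SimpleGraph V → Prop
  | base {V : Type} (G : SimpleGraph V) : P G → CliqueSumGen k P G
  | sum {V V₁ V₂ : Type} (G : SimpleGraph V) (G₁ : SimpleGraph V₁) (G₂ : SimpleGraph V₂) :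
      CliqueSumGen k P G₁ → P G₂ → IsCliqueSumOf k G G₁ G₂ → CliqueSumGen k P G

/-! ## Simplicial blowups and agreeability -/

/-- `IsSimplicialBlowup k G Q`: the multigraph `Q` is a `(≤ k)`-simplicial blowup of the
simple graph `G`: it is obtained from `G` by adding an independent set of new vertices, each
adjacent to all vertices of some clique of size at most `k` of `G` (possibly with parallel
edges), and finally deleting zero or more edges from the cliques involved. -/
def IsSimplicialBlowup (k : ℕ) {V W F : Type} (G : SimpleGraph V) (Q : Multigraph W F) :
    Prop :=
  ∃ (ι : V → W) (C : W → Set V),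
    Function.Injective ι ∧
    (∀ u : W, u ∉ Set.range ι → G.IsClique (C u) ∧ (C u).Finite ∧ (C u).ncard ≤ k) ∧
    (∀ u : W, u ∉ Set.range ι → ∀ a ∈ C u, ∃ e : F, Q.ends e = s(u, ι a)) ∧
    (∀ e : F, (∃ a b : V, G.Adj a b ∧ Q.ends e = s(ι a, ι b)) ∨
      (∃ (u : W) (a : V), u ∉ Set.range ι ∧ a ∈ C u ∧ Q.ends e = s(u, ι a))) ∧
    (∀ e f : F, ∀ a b : V, Q.ends e = s(ι a, ι b) → Q.ends f = s(ι a, ι b) → e = f) ∧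
    (∀ a b : V, G.Adj a b →
      (∃ e : F, Q.ends e = s(ι a, ι b)) ∨ ∃ u : W, u ∉ Set.range ι ∧ a ∈ C u ∧ b ∈ C u)

/-- A graph `R` is `(k, c)`-agreeable if for every induced subgraph `R'` of `R` and every
(finite) `(≤ k)`-simplicial blowup `R*` of `R'`, `rcr(R*) ≤ c · Δ(R*) · ‖R*‖`. -/
def Agreeable (k : ℕ) (c : ℝ) {V : Type} (G : SimpleGraph V) : Prop :=
  ∀ (s : Set V) (W F : Type), Finite W → Finite F → ∀ Q : Multigraph W F,
    IsSimplicialBlowup k (G.induce s) Q →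
    (Q.rcr : ℝ) ≤ c * Q.maxDeg * Q.edgeCount

/-! ## H-partitions -/

/-- An `H`-partition of a multigraph `K`: the vertices of the simple graph `H` index
nonempty bags partitioning `V(K)`, and whenever an edge of `K` has endpoints in two distinct
bags, the corresponding vertices of `H` are adjacent. -/
def IsHPartition {V E ι : Type} (K : Multigraph V E) (H : SimpleGraph ι) (B : ι → Set V) :
    Prop :=
  (∀ x : ι, (B x).Nonempty) ∧
  (∀ v : V, ∃! x : ι, v ∈ B x) ∧
  (∀ e : E, ∀ u ∈ K.ends e, ∀ v ∈ K.ends e, ∀ x y : ι,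
    u ∈ B x → v ∈ B y → x ≠ y → H.Adj x y)

/-- A separating triangle of `G`: a triangle whose removal disconnects `G`. -/
def HasSepTriangle {V : Type} (G : SimpleGraph V) : Prop :=
  ∃ a b c : V, G.Adj a b ∧ G.Adj a c ∧ G.Adj b c ∧
    ∃ u v : (({a, b, c} : Set V)ᶜ : Set V),
      ¬ (G.induce (({a, b, c} : Set V)ᶜ)).Reachable u v


/-- For `t ≥ 1`, the complete graph `K_t` is `(t, t − 1)`-agreeable. -/
theorem agreeable_completeGraph (t : ℕ) (ht : 1 ≤ t) :
    Agreeable t ((t : ℝ) - 1) (⊤ : SimpleGraph (Fin t)) := by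
  intro s W F hW hF Q hQ
  classical
  obtain ⟨ι, C, hιinj, hCclique, hCedge, hends, hsimp, hGadj⟩ := hQ
  haveI : Fintype F := Fintype.ofFinite F
  haveI : Fintype W := Fintype.ofFinite W
  haveI : Fintype ↥s := Fintype.ofFinite ↥s
  -- every edge is incident with ι a for some a
  have hinc : ∀ e : F, ∃ a : ↥s, ι a ∈ Q.ends e := by
    intro e
    rcases hends e with ⟨a, b, hab, he⟩ | ⟨u, a, hu, ha, he⟩
    · exact ⟨a, by rw [he]; exact Sym2.mem_mk_left _ _⟩
    · exact ⟨a, by rw [he]; exact Sym2.mem_mk_right _ _⟩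
  -- rcr is at most any uniform bound on crossCount
  have hrcr_le : ∀ B : ℕ, (∀ p : W → ℝ × ℝ, Q.crossCount p ≤ B) → Q.rcr ≤ B := by
    intro B hB
    rw [Multigraph.rcr]
    rcases Set.eq_empty_or_nonempty
        {n | ∃ p : W → ℝ × ℝ, Q.IsRectDrawing p ∧ Q.crossCount p = n} with h | h
    · rw [h, Nat.sInf_empty]; exact Nat.zero_le B
    · obtain ⟨n, p, hp, hn⟩ := h
      exact le_trans (Nat.sInf_le ⟨p, hp, hn⟩) (hn ▸ hB p)
  -- degrees are at most the maximum degree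
  have hΔ : ∀ v : W, Q.deg v ≤ Q.maxDeg := fun v =>
    le_csSup ((Set.finite_range Q.deg).bddAbove) (Set.mem_range_self v)
  -- crossing pairs are pairs of distinct edges
  have hcc : ∀ p : W → ℝ × ℝ, Q.crossCount p ≤ (Nat.card F).choose 2 := by
    intro p
    have key : ∀ x : {σ : Sym2 F // ∃ e f : F, σ = s(e, f) ∧ Q.CrossingPair p e f},
        ¬ x.1.IsDiag := by
      rintro ⟨σ, e, f, rfl, hcp⟩ hd
      rw [Sym2.mk_isDiag_iff] at hd
      obtain ⟨a, ha⟩ := hinc e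
      exact hcp.1 (ι a) ⟨ha, hd ▸ ha⟩
    have h1 : Q.crossCount p ≤ Nat.card {σ : Sym2 F // ¬ σ.IsDiag} :=
      Nat.card_le_card_of_injective (fun x => ⟨x.1, key x⟩)
        (fun x y h => Subtype.ext (Subtype.mk_eq_mk.mp h))
    refine h1.trans (le_of_eq ?_)
    rw [Nat.card_eq_fintype_card, Nat.card_eq_fintype_card, Sym2.card_subtype_not_diag]
  -- the number of edges is at most t * Δ
  have hn : Nat.card F ≤ t * Q.maxDeg := by
    choose g hg using hinc
    set ψ : F → Σ a : ↥s, {e : F // ι a ∈ Q.ends e} := fun e => ⟨g e, e, hg e⟩ with hψdef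
    have hψ : Function.Injective ψ := by
      have : Function.LeftInverse (fun x : Σ a : ↥s, {e : F // ι a ∈ Q.ends e} => (x.2 : F)) ψ :=
        fun e => rfl
      exact this.injective
    have h1 : Nat.card F ≤ Nat.card (Σ a : ↥s, {e : F // ι a ∈ Q.ends e}) :=
      Nat.card_le_card_of_injective ψ hψ
    have h2 : Nat.card (Σ a : ↥s, {e : F // ι a ∈ Q.ends e})
        = ∑ a : ↥s, Fintype.card {e : F // ι a ∈ Q.ends e} := by
      rw [Nat.card_eq_fintype_card, Fintype.card_sigma]
    have h3 : ∀ a : ↥s, Fintype.card {e : F // ι a ∈ Q.ends e} ≤ Q.maxDeg := by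
      intro a
      have : Fintype.card {e : F // ι a ∈ Q.ends e} = Q.deg (ι a) := by
        rw [Multigraph.deg, Nat.card_eq_fintype_card]
      rw [this]; exact hΔ (ι a)
    have h4 : ∑ a : ↥s, Fintype.card {e : F // ι a ∈ Q.ends e}
        ≤ ∑ _a : ↥s, Q.maxDeg := Finset.sum_le_sum (fun a _ => h3 a)
    have h5 : ∑ _a : ↥s, Q.maxDeg = Fintype.card ↥s * Q.maxDeg := by
      rw [Finset.sum_const, Finset.card_univ, smul_eq_mul]
    have h6 : Fintype.card ↥s ≤ t := by
      have := Fintype.card_le_of_injective (Subtype.val : ↥s → Fin t) Subtype.val_injective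
      simpa using this
    calc Nat.card F ≤ ∑ a : ↥s, Fintype.card {e : F // ι a ∈ Q.ends e} := h2 ▸ h1
      _ ≤ Fintype.card ↥s * Q.maxDeg := h4.trans (le_of_eq h5)
      _ ≤ t * Q.maxDeg := Nat.mul_le_mul_right _ h6
  have hedge : Q.edgeCount = Nat.card F := rfl
  rcases (by omega : t = 1 ∨ 2 ≤ t) with ht1 | ht2
  · -- t = 1 : no crossings at all
    subst ht1
    haveI : Subsingleton ↥s := ⟨fun a b => Subtype.ext (Subsingleton.elim _ _)⟩
    have hzero : ∀ p : W → ℝ × ℝ, Q.crossCount p = 0 := by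
      intro p
      have hempty : IsEmpty {σ : Sym2 F // ∃ e f : F, σ = s(e, f) ∧ Q.CrossingPair p e f} := by
        constructor
        rintro ⟨σ, e, f, rfl, hcp⟩
        obtain ⟨a, ha⟩ := hinc e
        obtain ⟨b, hb⟩ := hinc f
        have hab : a = b := Subsingleton.elim a b
        exact hcp.1 (ι a) ⟨ha, hab ▸ hb⟩
      exact Nat.card_of_isEmpty
    have h0 : Q.rcr ≤ 0 := hrcr_le 0 (fun p => le_of_eq (hzero p))
    have : Q.rcr = 0 := Nat.le_zero.mp h0
    rw [this]
    simp
  · -- t ≥ 2 : count pairs of edges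
    have harith : (Nat.card F).choose 2 ≤ (t - 1) * Q.maxDeg * Nat.card F := by
      set n := Nat.card F
      have hkey : n - 1 ≤ 2 * ((t - 1) * Q.maxDeg) := by
        have htt : t ≤ 2 * (t - 1) := by omega
        have h1 : t * Q.maxDeg ≤ 2 * (t - 1) * Q.maxDeg := Nat.mul_le_mul_right _ htt
        have h2 : 2 * (t - 1) * Q.maxDeg = 2 * ((t - 1) * Q.maxDeg) := by ring
        exact le_trans (Nat.sub_le n 1) (hn.trans (h2 ▸ h1))
      calc n.choose 2 = n * (n - 1) / 2 := Nat.choose_two_right n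
        _ ≤ n * (2 * ((t - 1) * Q.maxDeg)) / 2 :=
            Nat.div_le_div_right (Nat.mul_le_mul_left n hkey)
        _ = (t - 1) * Q.maxDeg * n := by
            rw [show n * (2 * ((t - 1) * Q.maxDeg)) = 2 * ((t - 1) * Q.maxDeg * n) by ring]
            exact Nat.mul_div_cancel_left _ (by norm_num)
    have hfinal : Q.rcr ≤ (t - 1) * Q.maxDeg * Nat.card F :=
      (hrcr_le _ hcc).trans harith
    have hcast : (Q.rcr : ℝ) ≤ (((t - 1) * Q.maxDeg * Nat.card F : ℕ) : ℝ) :=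
      Nat.cast_le.mpr hfinal
    rw [hedge]
    calc (Q.rcr : ℝ) ≤ (((t - 1) * Q.maxDeg * Nat.card F : ℕ) : ℝ) := hcast
      _ = ((t : ℝ) - 1) * Q.maxDeg * Nat.card F := by
          push_cast [Nat.cast_sub ht]
          ring
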